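/- arXiv:1704.05553 — 2 statements merged into one kernel-verified Lean document; each statement's English description precedes it below -/
import Mathlib

section
/- Let m, n ≥ 1, let O ⊆ ℝᵐ be open, and let u : ℝᵐ → ℂⁿ be twice continuously differentiable on O. Suppose the Gram matrix g(t), with entries g_{ij}(t) = ⟨∂_i u(t), ∂_j u(t)⟩, is invertible for every t ∈ O; write s(t) = √(det g(t)) and g^{ij}(t) for the entries of g(t)⁻¹. Assume u is isotropic on O: ⟨J ∂_i u(t), ∂_j u(t)⟩ = 0 for all t ∈ O and all i, j. Then for every t ∈ O, Σ_{i,j} ∂_j( s · g^{ij} · ⟨J u, ∂_i u⟩ )(t) = ⟨J u(t), Σ_{i,j} ∂_j( s · g^{ij} · ∂_i u )(t)⟩. In particular, if additionally ⟨J u(t), Δ_g u(t)⟩ = 0 for all t ∈ O, where Δ_g u := s⁻¹ Σ_{i,j} ∂_j( s · g^{ij} · ∂_i u ), then Σ_{i,j} ∂_j( s · g^{ij} · ⟨J u, ∂_i u⟩ ) = 0 on O (the 1-form α = Σ_i ⟨J u, ∂_i u⟩ dt^i is coclosed). -/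
/-! By the product rule,
`∂_j (c ⟨Ju, ∂_i u⟩) = ⟨Ju, ∂_j (c ∂_i u)⟩ + c ⟨J ∂_j u, ∂_i u⟩`, and the last term vanishes
by isotropy; summing over `i, j` with `c = s g^{ij}` gives the identity. The coefficients are
differentiable because `g` is `C¹` with positive determinant (a Gram matrix is positive
semidefinite), and `s > 0` turns `⟨Ju, Δ_g u⟩ = 0` into the vanishing of the divergence. -/

/-- The standard complex structure `J x = i • x` on `ℂⁿ`. -/
noncomputable def Jc {n : ℕ} (x : EuclideanSpace ℂ (Fin n)) : EuclideanSpace ℂ (Fin n) :=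
  Complex.I • x

/-- The real inner product `⟨x, y⟩ = Re ⟪x, y⟫` on `ℂⁿ`. -/
noncomputable def rinner {n : ℕ} (x y : EuclideanSpace ℂ (Fin n)) : ℝ :=
  (inner ℂ x y : ℂ).re

/-- Partial derivative in the `k`-th coordinate direction of a map on `ℝᵐ`. -/
noncomputable def pd {m : ℕ} {E : Type*} [NormedAddCommGroup E] [NormedSpace ℝ E]
    (k : Fin m) (f : EuclideanSpace ℝ (Fin m) → E) (t : EuclideanSpace ℝ (Fin m)) : E :=
  fderiv ℝ f t (EuclideanSpace.single k 1)

/-- The Gram matrix `g_{ij} = ⟨∂_i u, ∂_j u⟩` of an immersion `u : ℝᵐ → ℂⁿ`. -/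
noncomputable def gram {m n : ℕ} (u : EuclideanSpace ℝ (Fin m) → EuclideanSpace ℂ (Fin n))
    (t : EuclideanSpace ℝ (Fin m)) : Matrix (Fin m) (Fin m) ℝ :=
  fun i j => rinner (pd i u t) (pd j u t)

section MatrixCalculus

variable {𝕜 X ι : Type*} [NontriviallyNormedField 𝕜] [NormedAddCommGroup X] [NormedSpace 𝕜 X]
  [Fintype ι] [DecidableEq ι] {A : X → Matrix ι ι 𝕜} {t : X}

theorem DifferentiableAt.matrix_det (hA : ∀ i j, DifferentiableAt 𝕜 (fun x => A x i j) t) :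
    DifferentiableAt 𝕜 (fun x => (A x).det) t := by
  simp only [Matrix.det_apply]
  fun_prop

theorem DifferentiableAt.matrix_adjugate (hA : ∀ i j, DifferentiableAt 𝕜 (fun x => A x i j) t)
    (i j : ι) : DifferentiableAt 𝕜 (fun x => (A x).adjugate i j) t := by
  simp only [Matrix.adjugate_apply]
  refine DifferentiableAt.matrix_det fun k l => ?_
  by_cases hk : k = j
  · simp [hk]
  · simpa [hk] using hA k l

theorem DifferentiableAt.matrix_inv (hA : ∀ i j, DifferentiableAt 𝕜 (fun x => A x i j) t)
    (hdet : (A t).det ≠ 0) (i j : ι) : DifferentiableAt 𝕜 (fun x => (A x)⁻¹ i j) t := by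
  simp only [Matrix.inv_def, Ring.inverse_eq_inv', Matrix.smul_apply, smul_eq_mul]
  exact ((DifferentiableAt.matrix_det hA).inv hdet).mul (.matrix_adjugate hA i j)

end MatrixCalculus

section RealInner

variable {n : ℕ}

theorem rinner_add_right (x y z : EuclideanSpace ℂ (Fin n)) :
    rinner x (y + z) = rinner x y + rinner x z := by
  simp [rinner]

theorem rinner_smul_right (r : ℝ) (x y : EuclideanSpace ℂ (Fin n)) :
    rinner x (r • y) = r * rinner x y := by
  simp [rinner]

theorem rinner_smul_left (r : ℝ) (x y : EuclideanSpace ℂ (Fin n)) :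
    rinner (r • x) y = r * rinner x y := by
  simp [rinner]

theorem sum_rinner {ι : Type*} (s : Finset ι) (f : ι → EuclideanSpace ℂ (Fin n))
    (y : EuclideanSpace ℂ (Fin n)) :
    rinner (∑ i ∈ s, f i) y = ∑ i ∈ s, rinner (f i) y := by
  simp [rinner, Complex.re_sum]

theorem rinner_sum {ι : Type*} (s : Finset ι) (x : EuclideanSpace ℂ (Fin n))
    (f : ι → EuclideanSpace ℂ (Fin n)) :
    rinner x (∑ i ∈ s, f i) = ∑ i ∈ s, rinner x (f i) := by
  simp [rinner, Complex.re_sum]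

variable {X : Type*} [NormedAddCommGroup X] [NormedSpace ℝ X] {w v : X → EuclideanSpace ℂ (Fin n)}
  {t : X}

theorem DifferentiableAt.rinner (hw : DifferentiableAt ℝ w t) (hv : DifferentiableAt ℝ v t) :
    DifferentiableAt ℝ (fun x => rinner (w x) (v x)) t :=
  Complex.reCLM.differentiableAt.comp t (hw.inner ℂ hv)

theorem fderiv_rinner_apply (hw : DifferentiableAt ℝ w t) (hv : DifferentiableAt ℝ v t) (h : X) :
    fderiv ℝ (fun x => rinner (w x) (v x)) t h
      = rinner (w t) (fderiv ℝ v t h) + rinner (fderiv ℝ w t h) (v t) := by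
  have hd : HasFDerivAt (fun x => rinner (w x) (v x))
      (Complex.reCLM.comp ((fderivInnerCLM ℂ (w t, v t)).comp ((fderiv ℝ w t).prod (fderiv ℝ v t))))
      t :=
    Complex.reCLM.hasFDerivAt.comp t (hw.hasFDerivAt.inner ℂ hv.hasFDerivAt)
  rw [hd.fderiv]
  simp [rinner]

theorem fderiv_mul_rinner_apply {c : X → ℝ} (hc : DifferentiableAt ℝ c t)
    (hw : DifferentiableAt ℝ w t) (hv : DifferentiableAt ℝ v t) (h : X) :
    fderiv ℝ (fun x => c x * rinner (w x) (v x)) t h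
      = rinner (w t) (fderiv ℝ (fun x => c x • v x) t h) + c t * rinner (fderiv ℝ w t h) (v t) := by
  rw [fderiv_fun_mul hc (hw.rinner hv), fderiv_fun_smul hc hv]
  simp only [add_apply, smul_apply, ContinuousLinearMap.smulRight_apply,
    fderiv_rinner_apply hw hv, rinner_add_right, rinner_smul_right, smul_eq_mul]
  ring

end RealInner

section Immersion

variable {m n : ℕ} {u : EuclideanSpace ℝ (Fin m) → EuclideanSpace ℂ (Fin n)}
  {O : Set (EuclideanSpace ℝ (Fin m))} {t : EuclideanSpace ℝ (Fin m)}

theorem ContDiffOn.differentiableAt_pd (hu : ContDiffOn ℝ 2 u O) (hO : IsOpen O) (ht : t ∈ O)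
    (k : Fin m) : DifferentiableAt ℝ (pd k u) t :=
  (((hu.fderiv_of_isOpen hO (by norm_num)).differentiableOn one_ne_zero).differentiableAt
    (hO.mem_nhds ht)).clm_apply (differentiableAt_const _)

theorem posSemidef_gram (u : EuclideanSpace ℝ (Fin m) → EuclideanSpace ℂ (Fin n))
    (t : EuclideanSpace ℝ (Fin m)) : (gram u t).PosSemidef := by
  have hsymm : (gram u t).IsHermitian :=
    Matrix.ext fun i j => inner_re_symm (𝕜 := ℂ) (pd j u t) (pd i u t)
  refine .of_dotProduct_mulVec_nonneg hsymm fun x => ?_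
  have hquad : star x ⬝ᵥ (gram u t).mulVec x
      = rinner (∑ i, x i • pd i u t) (∑ i, x i • pd i u t) := by
    simp only [dotProduct, Matrix.mulVec, gram, star_trivial, sum_rinner, rinner_sum,
      rinner_smul_left, rinner_smul_right, Finset.mul_sum]
    rw [Finset.sum_comm]
    exact Finset.sum_congr rfl fun i _ => Finset.sum_congr rfl fun j _ => by ring
  rw [hquad]
  exact inner_self_nonneg (𝕜 := ℂ)

theorem det_gram_pos (hg : IsUnit (gram u t)) : 0 < (gram u t).det :=
  (posSemidef_gram u t).det_nonneg.lt_of_ne' ((Matrix.isUnit_iff_isUnit_det _).mp hg).ne_zero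

theorem differentiableAt_gram_apply (hu : ContDiffOn ℝ 2 u O) (hO : IsOpen O) (ht : t ∈ O)
    (i j : Fin m) : DifferentiableAt ℝ (fun x => gram u x i j) t :=
  (hu.differentiableAt_pd hO ht i).rinner (hu.differentiableAt_pd hO ht j)

theorem differentiableAt_sqrt_det_gram_mul_inv_gram (hu : ContDiffOn ℝ 2 u O) (hO : IsOpen O)
    (ht : t ∈ O) (hg : IsUnit (gram u t)) (i j : Fin m) :
    DifferentiableAt ℝ (fun x => √(gram u x).det * (gram u x)⁻¹ i j) t := by
  have hgram := differentiableAt_gram_apply hu hO ht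
  have hdet := (det_gram_pos hg).ne'
  exact ((DifferentiableAt.matrix_det hgram).sqrt hdet).mul (.matrix_inv hgram hdet i j)

theorem pd_mul_rinner_Jc_eq_of_isotropic {c : EuclideanSpace ℝ (Fin m) → ℝ} {i j : Fin m}
    (hu : DifferentiableAt ℝ u t) (hui : DifferentiableAt ℝ (pd i u) t)
    (hc : DifferentiableAt ℝ c t) (hiso : rinner (Jc (pd j u t)) (pd i u t) = 0) :
    pd j (fun x => c x * rinner (Jc (u x)) (pd i u x)) t
      = rinner (Jc (u t)) (pd j (fun x => c x • pd i u x) t) := by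
  have hpdJ : pd j (fun x => Jc (u x)) t = Jc (pd j u t) := by
    simp only [pd, Jc, fderiv_fun_const_smul hu, smul_apply]
  have hJu : DifferentiableAt ℝ (fun x => Jc (u x)) t := hu.const_smul Complex.I
  rw [pd, fderiv_mul_rinner_apply hc hJu hui, ← pd, ← pd, hpdJ, hiso, mul_zero, add_zero]

end Immersion

theorem coclosedness_of_alpha_general (m n : ℕ)
    (O : Set (EuclideanSpace ℝ (Fin m))) (hO : IsOpen O)
    (u : EuclideanSpace ℝ (Fin m) → EuclideanSpace ℂ (Fin n))
    (hu : ContDiffOn ℝ 2 u O)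
    (hg : ∀ t ∈ O, IsUnit (gram u t))
    (s : EuclideanSpace ℝ (Fin m) → ℝ) (hs : ∀ t, s t = Real.sqrt (gram u t).det)
    (ginv : EuclideanSpace ℝ (Fin m) → Matrix (Fin m) (Fin m) ℝ)
    (hginv : ∀ t, ginv t = (gram u t)⁻¹)
    (hiso : ∀ t ∈ O, ∀ i j : Fin m, rinner (Jc (pd i u t)) (pd j u t) = 0) :
    (∀ t ∈ O,
      (∑ i : Fin m, ∑ j : Fin m,
          pd j (fun t => s t * ginv t i j * rinner (Jc (u t)) (pd i u t)) t)
        = rinner (Jc (u t))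
            (∑ i : Fin m, ∑ j : Fin m, pd j (fun t => (s t * ginv t i j) • pd i u t) t))
    ∧ ((∀ t ∈ O, rinner (Jc (u t))
          ((s t)⁻¹ • ∑ i : Fin m, ∑ j : Fin m,
            pd j (fun t => (s t * ginv t i j) • pd i u t) t) = 0) →
        ∀ t ∈ O,
          (∑ i : Fin m, ∑ j : Fin m,
            pd j (fun t => s t * ginv t i j * rinner (Jc (u t)) (pd i u t)) t) = 0) := by
  have hc : ∀ t ∈ O, ∀ i j : Fin m, DifferentiableAt ℝ (fun x => s x * ginv x i j) t := by
    obtain rfl : s = _ := funext hs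
    obtain rfl : ginv = _ := funext hginv
    exact fun t ht => differentiableAt_sqrt_det_gram_mul_inv_gram hu hO ht (hg t ht)
  refine (and_iff_left_of_imp fun hdiv hΔ t ht => ?_).2 fun t ht => ?_
  · have hs_ne : (s t)⁻¹ ≠ 0 := by
      rw [hs]
      exact inv_ne_zero (Real.sqrt_pos.2 (det_gram_pos (hg t ht))).ne'
    have h := hΔ t ht
    rw [rinner_smul_right, mul_eq_zero] at h
    rw [hdiv t ht]
    exact h.resolve_left hs_ne
  · simp only [rinner_sum]
    refine Finset.sum_congr rfl fun i _ => Finset.sum_congr rfl fun j _ => ?_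
    exact pd_mul_rinner_Jc_eq_of_isotropic
      ((hu.differentiableOn (by norm_num)).differentiableAt (hO.mem_nhds ht))
      (hu.differentiableAt_pd hO ht i) (hc t ht i j) (hiso t ht j i)

/-- For a `C²` isotropic map `u : ℝᵐ → ℂⁿ` with invertible Gram matrix on an open set `O`,
the divergence `Σ_{i,j} ∂_j (s g^{ij} ⟨Ju, ∂_i u⟩)` equals `⟨Ju, Σ_{i,j} ∂_j (s g^{ij} ∂_i u)⟩`;
in particular if `⟨Ju, Δ_g u⟩ = 0` on `O` then the 1-form `α = Σ_i ⟨Ju, ∂_i u⟩ dt^i`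
is coclosed on `O`. -/
theorem coclosedness_of_alpha (m n : ℕ) (hm : 1 ≤ m) (hn : 1 ≤ n)
    (O : Set (EuclideanSpace ℝ (Fin m))) (hO : IsOpen O)
    (u : EuclideanSpace ℝ (Fin m) → EuclideanSpace ℂ (Fin n))
    (hu : ContDiffOn ℝ 2 u O)
    (hg : ∀ t ∈ O, IsUnit (gram u t))
    (s : EuclideanSpace ℝ (Fin m) → ℝ) (hs : ∀ t, s t = Real.sqrt (gram u t).det)
    (ginv : EuclideanSpace ℝ (Fin m) → Matrix (Fin m) (Fin m) ℝ)
    (hginv : ∀ t, ginv t = (gram u t)⁻¹)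
    (hiso : ∀ t ∈ O, ∀ i j : Fin m, rinner (Jc (pd i u t)) (pd j u t) = 0) :
    (∀ t ∈ O,
      (∑ i : Fin m, ∑ j : Fin m,
          pd j (fun t => s t * ginv t i j * rinner (Jc (u t)) (pd i u t)) t)
        = rinner (Jc (u t))
            (∑ i : Fin m, ∑ j : Fin m, pd j (fun t => (s t * ginv t i j) • pd i u t) t))
    ∧ ((∀ t ∈ O, rinner (Jc (u t))
          ((s t)⁻¹ • ∑ i : Fin m, ∑ j : Fin m,
            pd j (fun t => (s t * ginv t i j) • pd i u t) t) = 0) →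
        ∀ t ∈ O,
          (∑ i : Fin m, ∑ j : Fin m,
            pd j (fun t => s t * ginv t i j * rinner (Jc (u t)) (pd i u t)) t) = 0) :=
  coclosedness_of_alpha_general m n O hO u hu hg s hs ginv hginv hiso
end

section
/- Let n ≥ 1, let O, O′ ⊆ ℂ be open, let φ : O′ → O be holomorphic, and let u : ℂ → ℂⁿ be continuously differentiable on O (regarding ℂ ≅ ℝ², with ∂₁, ∂₂ the partial derivatives in the real and imaginary coordinate directions). For a continuously differentiable map v into ℂⁿ set F_v(w) = ⟨J v(w), ∂₁v(w)⟩ − i·⟨J v(w), ∂₂v(w)⟩. Then for ũ := u ∘ φ one has F_ũ(w) = F_u(φ(w)) · φ′(w) for every w ∈ O′. -/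
/-- Partial derivative in the real coordinate direction for a map on `ℂ ≅ ℝ²`. -/
noncomputable def pd1 {E : Type*} [NormedAddCommGroup E] [NormedSpace ℝ E]
    (f : ℂ → E) (w : ℂ) : E :=
  fderiv ℝ f w 1

/-- Partial derivative in the imaginary coordinate direction for a map on `ℂ ≅ ℝ²`. -/
noncomputable def pd2 {E : Type*} [NormedAddCommGroup E] [NormedSpace ℝ E]
    (f : ℂ → E) (w : ℂ) : E :=
  fderiv ℝ f w Complex.I

/-- The Hopf-type function `F_v = ⟨Jv, ∂₁v⟩ - i⟨Jv, ∂₂v⟩` of a map `v : ℂ → ℂⁿ`. -/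
noncomputable def hopfF {n : ℕ} (v : ℂ → EuclideanSpace ℂ (Fin n)) (w : ℂ) : ℂ :=
  (rinner (Jc (v w)) (pd1 v w) : ℂ) - Complex.I * (rinner (Jc (v w)) (pd2 v w) : ℂ)

/-! `F_v(w)` only depends on the real-linear functional `ℓ = ⟨J v(w), dv_w(·)⟩` on `ℂ`, through
`ℓ 1 - i ℓ i`, the `dz`-coefficient of `ℓ`. By the chain rule, `dũ_w = du_{φ(w)} ∘ (φ'(w) · ·)`
since `φ` is holomorphic, and precomposing a functional with multiplication by `c` multiplies its
`dz`-coefficient by `c`. -/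

open Complex

/-- For real-linear `ℓ : ℂ → ℝ` one has `ℓ v = Re (dzCoeff ℓ * v)`; for `ℓ = df` this is `2 ∂f/∂z`. -/
noncomputable def dzCoeff (ℓ : ℂ →ₗ[ℝ] ℝ) : ℂ := ℓ 1 - I * ℓ I

lemma LinearMap.apply_eq_re_mul_add_im_mul (ℓ : ℂ →ₗ[ℝ] ℝ) (z : ℂ) :
    ℓ z = z.re * ℓ 1 + z.im * ℓ I := by
  calc ℓ z = ℓ (z.re • 1 + z.im • I) := by simp
    _ = z.re * ℓ 1 + z.im * ℓ I := by rw [map_add, map_smul, map_smul, smul_eq_mul, smul_eq_mul]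

lemma dzCoeff_comp_mulLeft (ℓ : ℂ →ₗ[ℝ] ℝ) (c : ℂ) :
    dzCoeff (ℓ ∘ₗ LinearMap.mulLeft ℝ c) = dzCoeff ℓ * c := by
  simp only [dzCoeff, LinearMap.comp_apply, LinearMap.mulLeft_apply, mul_one,
    ℓ.apply_eq_re_mul_add_im_mul c, ℓ.apply_eq_re_mul_add_im_mul (c * I), mul_re, mul_im,
    I_re, I_im]
  apply Complex.ext <;> simp <;> ring

noncomputable def rinnerRight {n : ℕ} (x : EuclideanSpace ℂ (Fin n)) :
    EuclideanSpace ℂ (Fin n) →ₗ[ℝ] ℝ :=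
  reLm ∘ₗ (innerₛₗ ℂ x).restrictScalars ℝ

lemma hopfF_eq_dzCoeff {n : ℕ} (v : ℂ → EuclideanSpace ℂ (Fin n)) (w : ℂ) :
    hopfF v w = dzCoeff (rinnerRight (Jc (v w)) ∘ₗ (fderiv ℝ v w : ℂ →ₗ[ℝ] _)) := rfl

lemma fderiv_comp_eq_comp_mulLeft_deriv {E : Type*} [NormedAddCommGroup E] [NormedSpace ℝ E]
    {u : ℂ → E} {φ : ℂ → ℂ} {w : ℂ} (hu : DifferentiableAt ℝ u (φ w))
    (hφ : DifferentiableAt ℂ φ w) :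
    (fderiv ℝ (u ∘ φ) w : ℂ →ₗ[ℝ] E) =
      (fderiv ℝ u (φ w) : ℂ →ₗ[ℝ] E) ∘ₗ LinearMap.mulLeft ℝ (deriv φ w) := by
  rw [fderiv_comp w hu (hφ.restrictScalars ℝ), hφ.fderiv_restrictScalars ℝ]
  ext v
  simp [mul_comm]

theorem hopf_differential_transformation_general (n : ℕ)
    (O O' : Set ℂ) (hO : IsOpen O) (hO' : IsOpen O')
    (φ : ℂ → ℂ) (hφ : DifferentiableOn ℂ φ O') (hmaps : Set.MapsTo φ O' O)
    (u : ℂ → EuclideanSpace ℂ (Fin n))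
    (hu : ContDiffOn ℝ 1 u O) :
    ∀ w ∈ O', hopfF (u ∘ φ) w = hopfF u (φ w) * deriv φ w := by
  intro w hw
  have hφw : DifferentiableAt ℂ φ w := hφ.differentiableAt (hO'.mem_nhds hw)
  have huw : DifferentiableAt ℝ u (φ w) :=
    (hu.contDiffAt (hO.mem_nhds (hmaps hw))).differentiableAt one_ne_zero
  rw [hopfF_eq_dzCoeff, hopfF_eq_dzCoeff, fderiv_comp_eq_comp_mulLeft_deriv huw hφw]
  exact dzCoeff_comp_mulLeft (rinnerRight (Jc (u (φ w))) ∘ₗ _) _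

/-- Transformation law for the Hopf-type quantity under a holomorphic change of
coordinates: for `ũ = u ∘ φ` with `φ` holomorphic, `F_ũ(w) = F_u(φ(w)) · φ′(w)`,
so `F_u dz` is a well-defined 1-differential. -/
theorem hopf_differential_transformation (n : ℕ) (hn : 1 ≤ n)
    (O O' : Set ℂ) (hO : IsOpen O) (hO' : IsOpen O')
    (φ : ℂ → ℂ) (hφ : DifferentiableOn ℂ φ O') (hmaps : Set.MapsTo φ O' O)
    (u : ℂ → EuclideanSpace ℂ (Fin n))
    (hu : ContDiffOn ℝ 1 u O) :
    ∀ w ∈ O', hopfF (u ∘ φ) w = hopfF u (φ w) * deriv φ w :=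
  hopf_differential_transformation_general n O O' hO hO' φ hφ hmaps u hu
end
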